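/- arXiv:2510.27076 — 2 statements merged into one kernel-verified Lean document; each statement's English description precedes it below -/
import Mathlib

section
/- For n ≥ 2k and k ≥ 4, the maximum of m(n,P) over all k×k permutation matrices P equals n² − 4k + 8. -/
open Finset

/-- Number of 1-entries of a (0,1)-matrix. -/
def onesCount {m n : ℕ} (A : Fin m → Fin n → Bool) : ℕ :=
  (Finset.univ.filter (fun p : Fin m × Fin n => A p.1 p.2 = true)).card

/-- Number of 0-entries of a (0,1)-matrix. -/
def zerosCount {m n : ℕ} (A : Fin m → Fin n → Bool) : ℕ :=
  (Finset.univ.filter (fun p : Fin m × Fin n => A p.1 p.2 = false)).card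

/-- `A` is `Q`-forcing: every s×t submatrix of `A` is entrywise ≥ Q. -/
def IsForcing {m n s t : ℕ} (A : Fin m → Fin n → Bool) (Q : Fin s → Fin t → Bool) : Prop :=
  ∀ (r : Fin s → Fin m) (c : Fin t → Fin n), StrictMono r → StrictMono c →
    ∀ y x, Q y x = true → A (r y) (c x) = true

/-- Minimum number of 1-entries of an m×n Q-forcing matrix. -/
noncomputable def mMin (m n : ℕ) {s t : ℕ} (Q : Fin s → Fin t → Bool) : ℕ :=
  sInf {v | ∃ A : Fin m → Fin n → Bool, IsForcing A Q ∧ onesCount A = v}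

/-- `A` is strongly `Q`-forcing: every 1-entry lies in a submatrix exactly equal to `Q`. -/
def IsStronglyForcing {m n s t : ℕ} (A : Fin m → Fin n → Bool)
    (Q : Fin s → Fin t → Bool) : Prop :=
  ∀ i j, A i j = true → ∃ (r : Fin s → Fin m) (c : Fin t → Fin n),
    StrictMono r ∧ StrictMono c ∧ (∀ y x, A (r y) (c x) = Q y x) ∧
    ∃ y x, r y = i ∧ c x = j

/-- Maximum number of 1-entries of an m×n strongly Q-forcing matrix. -/
noncomputable def MMax (m n : ℕ) {s t : ℕ} (Q : Fin s → Fin t → Bool) : ℕ :=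
  sSup {v | ∃ A : Fin m → Fin n → Bool, IsStronglyForcing A Q ∧ onesCount A = v}

/-- Corner sets of 0-positions with no 1-entry weakly in the given quadrant direction. -/
def cornerNW {s t : ℕ} (Q : Fin s → Fin t → Bool) : Finset (Fin s × Fin t) :=
  Finset.univ.filter (fun p => ∀ i' j', i' ≤ p.1 → j' ≤ p.2 → Q i' j' = false)

def cornerNE {s t : ℕ} (Q : Fin s → Fin t → Bool) : Finset (Fin s × Fin t) :=
  Finset.univ.filter (fun p => ∀ i' j', i' ≤ p.1 → p.2 ≤ j' → Q i' j' = false)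

def cornerSW {s t : ℕ} (Q : Fin s → Fin t → Bool) : Finset (Fin s × Fin t) :=
  Finset.univ.filter (fun p => ∀ i' j', p.1 ≤ i' → j' ≤ p.2 → Q i' j' = false)

def cornerSE {s t : ℕ} (Q : Fin s → Fin t → Bool) : Finset (Fin s × Fin t) :=
  Finset.univ.filter (fun p => ∀ i' j', p.1 ≤ i' → p.2 ≤ j' → Q i' j' = false)

/-- `P` is a permutation matrix. -/
def IsPermMatrix {k : ℕ} (P : Fin k → Fin k → Bool) : Prop :=
  ∃ σ : Equiv.Perm (Fin k), ∀ i j, P i j = decide (σ i = j)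

/-!
A zero of a forcing matrix at `(a, b)` forces the pattern to vanish on `window a × window b`,
where `window a` is the set of pattern rows that some increasing embedding sends to `a`; and
the matrix whose zeros are exactly these positions is itself forcing. When `2k ≤ n` and the
pattern has a 1 in every row and column, only positions among the first or last `k` rows and
columns qualify, and in each of the four corner blocks they correspond exactly to the corner set
of the pattern, so `m(n, P) = n² − Σ |corner|`.

For a permutation matrix the NW corner contains the first row up to its 1 and the first column
up to its 1, and lies in the rectangle these two segments span; reflecting `P` turns every
corner into a NW corner. Summing the lower bounds over the four reflections gives
`Σ |corner| ≥ 4k − 8`, and the 4-cycle `0 → 1 → k−1 → k−2 → 0` attains it, since each of its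
corner rectangles has a side of length 1.
-/

def window {m : ℕ} (s : ℕ) (a : Fin m) : Finset (Fin s) :=
  univ.filter fun y => (y : ℕ) ≤ a ∧ (a : ℕ) + s ≤ m + y

section Forcing

variable {m n s t : ℕ}

lemma mem_window {a : Fin m} {y : Fin s} :
    y ∈ window s a ↔ (y : ℕ) ≤ a ∧ (a : ℕ) + s ≤ m + y := by
  simp [window]

lemma mem_window_iff_exists_strictMono {a : Fin m} {y : Fin s} :
    y ∈ window s a ↔ ∃ r : Fin s → Fin m, StrictMono r ∧ r y = a := by
  constructor
  · intro hy
    rw [mem_window] at hy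
    refine ⟨fun z => ⟨a - y + z, by omega⟩, fun z w hzw => ?_, Fin.ext (by simp; omega)⟩
    simp only [Fin.lt_def] at hzw ⊢
    omega
  · rintro ⟨r, hr, rfl⟩
    have hIic : #(Iic y) ≤ #(Iic (r y)) :=
      card_le_card_of_injOn r (fun z hz => by simpa using hr.monotone (mem_Iic.1 hz))
        hr.injective.injOn
    have hIci : #(Ici y) ≤ #(Ici (r y)) :=
      card_le_card_of_injOn r (fun z hz => by simpa using hr.monotone (mem_Ici.1 hz))
        hr.injective.injOn
    rw [Fin.card_Iic, Fin.card_Iic] at hIic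
    rw [Fin.card_Ici, Fin.card_Ici] at hIci
    rw [mem_window]
    omega

def forcedZeros (m n : ℕ) (Q : Fin s → Fin t → Bool) : Finset (Fin m × Fin n) :=
  univ.filter fun p => ∀ y x, y ∈ window s p.1 → x ∈ window t p.2 → Q y x = false

lemma isForcing_iff {A : Fin m → Fin n → Bool} {Q : Fin s → Fin t → Bool} :
    IsForcing A Q ↔ ∀ a b, A a b = false → (a, b) ∈ forcedZeros m n Q := by
  simp only [IsForcing, forcedZeros, mem_filter, mem_univ, true_and,
    mem_window_iff_exists_strictMono]
  constructor
  · rintro hA a b hab y x ⟨r, hr, rfl⟩ ⟨c, hc, rfl⟩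
    by_contra hyx
    simp [hA r c hr hc y x (by simpa using hyx)] at hab
  · intro hA r c hr hc y x hyx
    by_contra hrc
    simp [hA _ _ (by simpa using hrc) y x ⟨r, hr, rfl⟩ ⟨c, hc, rfl⟩] at hyx

lemma onesCount_add_zerosCount (A : Fin m → Fin n → Bool) :
    onesCount A + zerosCount A = m * n := by
  simp only [onesCount, zerosCount, ← Bool.not_eq_true]
  rw [card_filter_add_card_filter_not, card_univ, Fintype.card_prod, Fintype.card_fin,
    Fintype.card_fin]

theorem mMin_eq_sub_card_forcedZeros (Q : Fin s → Fin t → Bool) :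
    mMin m n Q = m * n - #(forcedZeros m n Q) := by
  set A₀ : Fin m → Fin n → Bool := fun a b => decide ((a, b) ∉ forcedZeros m n Q)
  have hA₀ : IsForcing A₀ Q := isForcing_iff.2 fun a b h => by simpa [A₀] using h
  have hzeros : zerosCount A₀ = #(forcedZeros m n Q) := by
    simp [zerosCount, A₀]
  refine le_antisymm (Nat.sInf_le ⟨A₀, hA₀, ?_⟩) (le_csInf ⟨_, A₀, hA₀, rfl⟩ ?_)
  · have := onesCount_add_zerosCount A₀
    omega
  · rintro v ⟨A, hA, rfl⟩
    have hsub : zerosCount A ≤ #(forcedZeros m n Q) :=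
      card_le_card fun p hp => isForcing_iff.1 hA p.1 p.2 (mem_filter.1 hp).2
    have := onesCount_add_zerosCount A
    omega

def outerIndex (h : 2 * s ≤ m) : Fin s ⊕ Fin s → Fin m :=
  Sum.elim (fun i => ⟨i, by omega⟩) (fun i => ⟨m - s + i, by omega⟩)

def outerWindow : Fin s ⊕ Fin s → Finset (Fin s) :=
  Sum.elim Iic Ici

lemma outerIndex_injective (h : 2 * s ≤ m) : Function.Injective (outerIndex h) := by
  rintro (i | i) (j | j) hij <;>
    simp only [outerIndex, Sum.elim_inl, Sum.elim_inr, Fin.ext_iff, Sum.inl.injEq,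
      Sum.inr.injEq, reduceCtorEq] at hij ⊢ <;>
    omega

lemma window_outerIndex (h : 2 * s ≤ m) (u : Fin s ⊕ Fin s) :
    window s (outerIndex h u) = outerWindow u := by
  ext y
  rw [mem_window]
  rcases u with i | i <;>
    simp only [outerWindow, outerIndex, Sum.elim_inl, Sum.elim_inr, mem_Iic, mem_Ici,
      Fin.le_def] <;>
    omega

lemma exists_outerIndex_eq_or_window_eq_univ (h : 2 * s ≤ m) (a : Fin m) :
    (∃ u, outerIndex h u = a) ∨ window s a = univ := by
  by_cases hlo : (a : ℕ) < s
  · exact .inl ⟨.inl ⟨a, hlo⟩, rfl⟩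
  by_cases hhi : m - s ≤ a
  · exact .inl ⟨.inr ⟨a - (m - s), by omega⟩, Fin.ext (by simp [outerIndex]; omega)⟩
  exact .inr (eq_univ_of_forall fun y => mem_window.2 ⟨by omega, by omega⟩)

lemma window_nonempty [NeZero s] (h : s ≤ m) (a : Fin m) : (window s a).Nonempty := by
  have hs : 0 < s := Nat.pos_of_ne_zero (NeZero.ne s)
  exact ⟨⟨min a (s - 1), by omega⟩, mem_window.2 ⟨by simp, by simp; omega⟩⟩

def outerZeros (Q : Fin s → Fin t → Bool) : Finset ((Fin s ⊕ Fin s) × (Fin t ⊕ Fin t)) :=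
  univ.filter fun q => ∀ y x, y ∈ outerWindow q.1 → x ∈ outerWindow q.2 → Q y x = false

def cornerSum (Q : Fin s → Fin t → Bool) : ℕ :=
  #(cornerNW Q) + #(cornerNE Q) + #(cornerSW Q) + #(cornerSE Q)

lemma card_outerZeros (Q : Fin s → Fin t → Bool) : #(outerZeros Q) = cornerSum Q := by
  rw [outerZeros, card_filter]
  simp only [cornerSum, cornerNW, cornerNE, cornerSW, cornerSE, card_filter,
    Fintype.sum_prod_type, Fintype.sum_sum_type, outerWindow, Sum.elim_inl, Sum.elim_inr,
    mem_Iic, mem_Ici, sum_add_distrib]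
  ring

lemma forcedZeros_eq_map_outerZeros [NeZero s] [NeZero t] (hm : 2 * s ≤ m) (hn : 2 * t ≤ n)
    {Q : Fin s → Fin t → Bool} (hrow : ∀ y, ∃ x, Q y x = true) (hcol : ∀ x, ∃ y, Q y x = true) :
    forcedZeros m n Q =
      (outerZeros Q).map ⟨Prod.map (outerIndex hm) (outerIndex hn),
        (outerIndex_injective hm).prodMap (outerIndex_injective hn)⟩ := by
  ext ⟨a, b⟩
  simp only [forcedZeros, outerZeros, mem_filter, mem_univ, true_and, mem_map,
    Function.Embedding.coeFn_mk, Prod.exists, Prod.map_apply, Prod.mk.injEq]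
  constructor
  · intro hab
    obtain ⟨u, rfl⟩ | ha := exists_outerIndex_eq_or_window_eq_univ hm a
    · obtain ⟨v, rfl⟩ | hb := exists_outerIndex_eq_or_window_eq_univ hn b
      · exact ⟨u, v, by simpa only [window_outerIndex] using hab, rfl, rfl⟩
      obtain ⟨y, hy⟩ := window_nonempty (s := s) (by omega) (outerIndex hm u)
      obtain ⟨x, hx⟩ := hrow y
      simp [hab y x hy (hb ▸ mem_univ x)] at hx
    obtain ⟨x, hx⟩ := window_nonempty (s := t) (by omega) b
    obtain ⟨y, hy⟩ := hcol x
    simp [hab y x (ha ▸ mem_univ y) hx] at hy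
  · rintro ⟨u, v, huv, rfl, rfl⟩
    simpa only [window_outerIndex] using huv

theorem mMin_eq_sub_cornerSum [NeZero s] [NeZero t] (hm : 2 * s ≤ m) (hn : 2 * t ≤ n)
    {Q : Fin s → Fin t → Bool} (hrow : ∀ y, ∃ x, Q y x = true) (hcol : ∀ x, ∃ y, Q y x = true) :
    mMin m n Q = m * n - cornerSum Q := by
  rw [mMin_eq_sub_card_forcedZeros, forcedZeros_eq_map_outerZeros hm hn hrow hcol, card_map,
    card_outerZeros]

lemma card_cornerNE_eq_card_cornerNW (Q : Fin s → Fin t → Bool) :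
    #(cornerNE Q) = #(cornerNW fun i j => Q i j.rev) := by
  refine card_equiv ((Equiv.refl _).prodCongr Fin.revPerm) fun p => ?_
  simp only [cornerNE, cornerNW, mem_filter, mem_univ, true_and, Equiv.prodCongr_apply]
  refine ⟨fun h i j hi hj => h i j.rev hi (Fin.le_rev_iff.1 hj), fun h i j hi hj => ?_⟩
  simpa using h i j.rev hi (Fin.rev_le_rev.2 hj)

lemma card_cornerSW_eq_card_cornerNW (Q : Fin s → Fin t → Bool) :
    #(cornerSW Q) = #(cornerNW fun i j => Q i.rev j) := by
  refine card_equiv (Fin.revPerm.prodCongr (Equiv.refl _)) fun p => ?_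
  simp only [cornerSW, cornerNW, mem_filter, mem_univ, true_and, Equiv.prodCongr_apply]
  refine ⟨fun h i j hi hj => h i.rev j (Fin.le_rev_iff.1 hi) hj, fun h i j hi hj => ?_⟩
  simpa using h i.rev j (Fin.rev_le_rev.2 hi) hj

lemma card_cornerSE_eq_card_cornerNW (Q : Fin s → Fin t → Bool) :
    #(cornerSE Q) = #(cornerNW fun i j => Q i.rev j.rev) := by
  refine card_equiv (Fin.revPerm.prodCongr Fin.revPerm) fun p => ?_
  simp only [cornerSE, cornerNW, mem_filter, mem_univ, true_and, Equiv.prodCongr_apply]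
  refine ⟨fun h i j hi hj => h i.rev j.rev (Fin.le_rev_iff.1 hi) (Fin.le_rev_iff.1 hj),
    fun h i j hi hj => ?_⟩
  simpa using h i.rev j.rev (Fin.rev_le_rev.2 hi) (Fin.rev_le_rev.2 hj)

end Forcing

section Perm

variable {k : ℕ}

def permMatrix (σ : Equiv.Perm (Fin k)) : Fin k → Fin k → Bool :=
  fun i j => decide (σ i = j)

lemma permMatrix_rev_right (σ : Equiv.Perm (Fin k)) :
    (fun i j => permMatrix σ i j.rev) = permMatrix (σ.trans Fin.revPerm) := by
  ext i j
  simp [permMatrix, Fin.rev_eq_iff, eq_comm]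

lemma permMatrix_rev_left (σ : Equiv.Perm (Fin k)) :
    (fun i j => permMatrix σ i.rev j) = permMatrix (Fin.revPerm.trans σ) := by
  ext i j
  simp [permMatrix]

lemma cornerSum_permMatrix (σ : Equiv.Perm (Fin k)) :
    cornerSum (permMatrix σ) =
      #(cornerNW (permMatrix σ)) + #(cornerNW (permMatrix (σ.trans Fin.revPerm))) +
        #(cornerNW (permMatrix (Fin.revPerm.trans σ))) +
        #(cornerNW (permMatrix (Fin.revPerm.trans (σ.trans Fin.revPerm)))) := by
  have hrev : (fun i j => permMatrix σ i.rev j.rev) =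
      permMatrix (Fin.revPerm.trans (σ.trans Fin.revPerm)) := by
    rw [← permMatrix_rev_left, ← permMatrix_rev_right]
  rw [cornerSum, card_cornerNE_eq_card_cornerNW, card_cornerSW_eq_card_cornerNW,
    card_cornerSE_eq_card_cornerNW, hrev, permMatrix_rev_right, permMatrix_rev_left]

variable [NeZero k]

lemma card_cornerNW_permMatrix_le (σ : Equiv.Perm (Fin k)) :
    #(cornerNW (permMatrix σ)) ≤ σ.symm 0 * σ 0 := by
  calc #(cornerNW (permMatrix σ)) ≤ #(Iio (σ.symm 0) ×ˢ Iio (σ 0)) := by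
        refine card_le_card fun p hp => ?_
        simp only [cornerNW, mem_filter, mem_univ, true_and, permMatrix,
          decide_eq_false_iff_not] at hp
        simp only [mem_product, mem_Iio]
        exact ⟨lt_of_not_ge fun h => hp _ 0 h (Fin.zero_le _) (by simp),
          lt_of_not_ge fun h => hp 0 _ (Fin.zero_le _) h rfl⟩
    _ = σ.symm 0 * σ 0 := by simp

lemma le_card_cornerNW_permMatrix (σ : Equiv.Perm (Fin k)) :
    (σ 0 : ℕ) + σ.symm 0 ≤ #(cornerNW (permMatrix σ)) + 1 := by
  set R := ({0} : Finset (Fin k)) ×ˢ Iio (σ 0)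
  set C := Iio (σ.symm 0) ×ˢ ({0} : Finset (Fin k))
  have hR : R ⊆ cornerNW (permMatrix σ) := by
    simp only [R, subset_iff, mem_product, mem_singleton, mem_Iio, cornerNW, mem_filter,
      mem_univ, true_and, permMatrix, decide_eq_false_iff_not]
    rintro ⟨i, j⟩ ⟨rfl, hj⟩ i' j' hi' hj' hσ
    rw [nonpos_iff_eq_zero.1 hi'] at hσ
    subst hσ
    exact absurd hj' (not_le.2 hj)
  have hC : C ⊆ cornerNW (permMatrix σ) := by
    simp only [C, subset_iff, mem_product, mem_singleton, mem_Iio, cornerNW, mem_filter,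
      mem_univ, true_and, permMatrix, decide_eq_false_iff_not]
    rintro ⟨i, j⟩ ⟨hi, rfl⟩ i' j' hi' hj' hσ
    rw [nonpos_iff_eq_zero.1 hj', ← Equiv.eq_symm_apply] at hσ
    subst hσ
    exact absurd hi' (not_le.2 hi)
  have hRC : #(R ∩ C) ≤ 1 := by
    rw [product_inter_product, card_product]
    exact Nat.mul_le_mul ((card_le_card inter_subset_left).trans (card_singleton _).le)
      ((card_le_card inter_subset_right).trans (card_singleton _).le)
  have hRcard : #R = σ 0 := by simp [R]
  have hCcard : #C = σ.symm 0 := by simp [C]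
  have := card_union_add_card_inter R C
  have := card_le_card (union_subset hR hC)
  omega

lemma card_cornerNW_permMatrix_add_one {σ : Equiv.Perm (Fin k)}
    (h : (σ 0 : ℕ) = 1 ∨ (σ.symm 0 : ℕ) = 1) :
    #(cornerNW (permMatrix σ)) + 1 = σ 0 + σ.symm 0 := by
  have hle := card_cornerNW_permMatrix_le σ
  have hge := le_card_cornerNW_permMatrix σ
  rcases h with h | h <;> rw [h] at hle hge <;> simp only [mul_one, one_mul] at hle <;> omega

lemma le_cornerSum_permMatrix (σ : Equiv.Perm (Fin k)) :
    4 * k ≤ cornerSum (permMatrix σ) + 8 := by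
  have h₁ := le_card_cornerNW_permMatrix σ
  have h₂ := le_card_cornerNW_permMatrix (σ.trans Fin.revPerm)
  have h₃ := le_card_cornerNW_permMatrix (Fin.revPerm.trans σ)
  have h₄ := le_card_cornerNW_permMatrix (Fin.revPerm.trans (σ.trans Fin.revPerm))
  simp only [Equiv.trans_apply, Equiv.symm_trans_apply, Fin.revPerm_apply, Fin.revPerm_symm,
    Fin.val_rev] at h₂ h₃ h₄
  have := (σ.symm (Fin.rev 0)).isLt
  have := (σ (Fin.rev 0)).isLt
  have := (σ.symm 0).isLt
  have := (σ 0).isLt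
  rw [cornerSum_permMatrix]
  omega

end Perm

-- the 4-cycle `0 → 1 → k-1 → k-2 → 0`
def extremalPerm (k : ℕ) [NeZero k] : Equiv.Perm (Fin k) :=
  Equiv.swap 0 1 * Equiv.swap 1 (Fin.rev 0) * Equiv.swap (Fin.rev 0) (Fin.rev 1)

lemma cornerSum_extremalPerm {k : ℕ} [NeZero k] (hk : 4 ≤ k) :
    cornerSum (permMatrix (extremalPerm k)) = 4 * k - 8 := by
  set σ := extremalPerm k
  have hone : ((1 : Fin k) : ℕ) = 1 := by rw [Fin.val_one', Nat.mod_eq_of_lt]; omega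
  have h01 : (0 : Fin k) ≠ 1 := Fin.ne_of_val_ne (by rw [hone]; simp)
  have h0r0 : (0 : Fin k) ≠ Fin.rev 0 := Fin.ne_of_val_ne (by rw [Fin.val_rev]; simp; omega)
  have h0r1 : (0 : Fin k) ≠ Fin.rev 1 :=
    Fin.ne_of_val_ne (by rw [Fin.val_rev, hone]; simp; omega)
  have h1r0 : (1 : Fin k) ≠ Fin.rev 0 :=
    Fin.ne_of_val_ne (by rw [Fin.val_rev, hone]; simp; omega)
  have h1r1 : (1 : Fin k) ≠ Fin.rev 1 := Fin.ne_of_val_ne (by rw [Fin.val_rev, hone]; omega)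
  have hr0r1 : Fin.rev (0 : Fin k) ≠ Fin.rev 1 := by simpa using h01
  have hσ0 : σ 0 = 1 := by
    simp only [σ, extremalPerm, Equiv.Perm.mul_apply, Equiv.swap_apply_of_ne_of_ne h0r0 h0r1,
      Equiv.swap_apply_of_ne_of_ne h01 h0r0, Equiv.swap_apply_left]
  have hσ1 : σ 1 = Fin.rev 0 := by
    simp only [σ, extremalPerm, Equiv.Perm.mul_apply, Equiv.swap_apply_of_ne_of_ne h1r0 h1r1,
      Equiv.swap_apply_left, Equiv.swap_apply_of_ne_of_ne h0r0.symm h1r0.symm]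
  have hσr0 : σ (Fin.rev 0) = Fin.rev 1 := by
    simp only [σ, extremalPerm, Equiv.Perm.mul_apply, Equiv.swap_apply_left,
      Equiv.swap_apply_of_ne_of_ne h1r1.symm hr0r1.symm,
      Equiv.swap_apply_of_ne_of_ne h0r1.symm h1r1.symm]
  have hσr1 : σ (Fin.rev 1) = 0 := by
    simp only [σ, extremalPerm, Equiv.Perm.mul_apply, Equiv.swap_apply_right]
  have hσs0 : σ.symm 0 = Fin.rev 1 := by rw [Equiv.symm_apply_eq, hσr1]
  have hσsr0 : σ.symm (Fin.rev 0) = 1 := by rw [Equiv.symm_apply_eq, hσ1]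
  have e₁ := card_cornerNW_permMatrix_add_one (σ := σ) (.inl (by rw [hσ0, hone]))
  have e₂ := card_cornerNW_permMatrix_add_one (σ := σ.trans Fin.revPerm)
    (.inr (by simp only [Equiv.symm_trans_apply, Fin.revPerm_symm, Fin.revPerm_apply, hσsr0,
      hone]))
  have e₃ := card_cornerNW_permMatrix_add_one (σ := Fin.revPerm.trans σ)
    (.inr (by simp only [Equiv.symm_trans_apply, Fin.revPerm_symm, Fin.revPerm_apply,
      Fin.rev_rev, hσs0, hone]))
  have e₄ := card_cornerNW_permMatrix_add_one (σ := Fin.revPerm.trans (σ.trans Fin.revPerm))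
    (.inl (by simp only [Equiv.trans_apply, Fin.revPerm_apply, Fin.rev_rev, hσr0, hone]))
  simp only [Equiv.trans_apply, Equiv.symm_trans_apply, Fin.revPerm_apply, Fin.revPerm_symm,
    hσ0, hσs0, hσr0, hσsr0, Fin.rev_rev, Fin.val_rev, hone] at e₁ e₂ e₃ e₄
  rw [cornerSum_permMatrix]
  omega

lemma mMin_permMatrix {k n : ℕ} [NeZero k] (hn : 2 * k ≤ n) (σ : Equiv.Perm (Fin k)) :
    mMin n n (permMatrix σ) = n ^ 2 - cornerSum (permMatrix σ) := by
  rw [sq, mMin_eq_sub_cornerSum hn hn (fun y => ⟨σ y, by simp [permMatrix]⟩)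
    (fun x => ⟨σ.symm x, by simp [permMatrix]⟩)]

theorem stmt10 (k n : ℕ) (hk : 4 ≤ k) (hn : 2 * k ≤ n) :
    IsGreatest {v | ∃ P : Fin k → Fin k → Bool, IsPermMatrix P ∧ mMin n n P = v}
      (n ^ 2 - 4 * k + 8) := by
  have : NeZero k := ⟨by omega⟩
  have hn2 : 4 * k ≤ n ^ 2 := by nlinarith
  refine ⟨⟨permMatrix (extremalPerm k), ⟨_, fun _ _ => rfl⟩, ?_⟩, ?_⟩
  · rw [mMin_permMatrix hn, cornerSum_extremalPerm hk]
    omega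
  · rintro v ⟨P, ⟨σ, hσ⟩, rfl⟩
    obtain rfl : P = permMatrix σ := funext₂ hσ
    have := le_cornerSum_permMatrix σ
    rw [mMin_permMatrix hn]
    omega
end

section
/- For n ≥ 3, the n×n matrix S_n = 1 ⊕ (J_{n−1} − H_{n−1}) (a single 1 in the top-left corner, zeros in the rest of the first row and column, and all-ones minus the anti-diagonal identity in the remaining (n−1)×(n−1) block) is strongly I_3-forcing and has exactly n² − 3n + 3 ones; hence M(n, I_3) ≥ n² − 3n + 3. -/
/-!
Every 1-entry of `S_n` lies on a copy of `I₃` through the corner `(0, 0)`: for `0 < a`, `0 < b`,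
`a + b < n`, rows `0 < a < n - b` and columns `0 < b < n - a` cut out `I₃`, because the only
positions of the lower-right block among them that lie on the anti-diagonal `i + j = n` are
`(a, n - a)` and `(n - b, b)`. The entry `(a, b)` sits at position `(1, 1)` of this copy and
`(n - b, n - a)` at `(2, 2)`, so the copies for `a + b < n` also cover the entries with `i + j > n`.
-/

open Finset

local notation "I₃" => fun (i j : Fin 3) => decide (i = j)

theorem onesCount_eq_sum_card_row {m n : ℕ} (A : Fin m → Fin n → Bool) :
    onesCount A = ∑ i, #{j | A i j = true} := by
  rw [onesCount, card_filter, Fintype.sum_prod_type]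
  simp only [card_filter]

theorem onesCount_le_mul {m n : ℕ} (A : Fin m → Fin n → Bool) : onesCount A ≤ m * n :=
  (card_filter_le _ _).trans (by simp)

theorem onesCount_le_MMax {m n s t : ℕ} {A : Fin m → Fin n → Bool} {Q : Fin s → Fin t → Bool}
    (hA : IsStronglyForcing A Q) : onesCount A ≤ MMax m n Q :=
  le_csSup ⟨m * n, fun _ ⟨B, _, hB⟩ => hB ▸ onesCount_le_mul B⟩ ⟨A, hA, rfl⟩

theorem strictMono_vecCons₃ {α : Type*} [Preorder α] {a b c : α} (hab : a < b) (hbc : b < c) :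
    StrictMono ![a, b, c] := by
  intro x y hxy
  fin_cases x <;> fin_cases y <;> simp_all [hab.trans hbc]

/-- The paper's `S_n = 1 ⊕ (J_{n-1} - H_{n-1})` with `0`-based indices, so that the
anti-diagonal of the lower-right block is `i + j = n`. -/
def sMatrix (n : ℕ) : Fin n → Fin n → Bool :=
  fun i j => decide (((i : ℕ) = 0 ∧ (j : ℕ) = 0) ∨
    ((i : ℕ) ≠ 0 ∧ (j : ℕ) ≠ 0 ∧ (i : ℕ) + (j : ℕ) ≠ n))

theorem sMatrix_eq_true_iff {n : ℕ} (i j : Fin n) :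
    sMatrix n i j = true ↔ ((i : ℕ) = 0 ∧ (j : ℕ) = 0) ∨
      ((i : ℕ) ≠ 0 ∧ (j : ℕ) ≠ 0 ∧ (i : ℕ) + (j : ℕ) ≠ n) :=
  decide_eq_true_iff

theorem exists_sMatrix_submatrix_eq_I₃ {n a b : ℕ} (ha : 0 < a) (hb : 0 < b) (hab : a + b < n) :
    ∃ r c : Fin 3 → Fin n, StrictMono r ∧ StrictMono c ∧
      (∀ y x, sMatrix n (r y) (c x) = decide (y = x)) ∧
      (r 0 : ℕ) = 0 ∧ (c 0 : ℕ) = 0 ∧ (r 1 : ℕ) = a ∧ (c 1 : ℕ) = b ∧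
      (r 2 : ℕ) = n - b ∧ (c 2 : ℕ) = n - a := by
  refine ⟨![⟨0, by omega⟩, ⟨a, by omega⟩, ⟨n - b, by omega⟩],
    ![⟨0, by omega⟩, ⟨b, by omega⟩, ⟨n - a, by omega⟩],
    strictMono_vecCons₃ (Fin.mk_lt_mk.2 ha) (Fin.mk_lt_mk.2 (by omega)),
    strictMono_vecCons₃ (Fin.mk_lt_mk.2 hb) (Fin.mk_lt_mk.2 (by omega)),
    fun y x => ?_, rfl, rfl, rfl, rfl, rfl, rfl⟩
  rw [Bool.eq_iff_iff, sMatrix_eq_true_iff, decide_eq_true_iff]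
  fin_cases y <;> fin_cases x <;> simp <;> omega

theorem isStronglyForcing_sMatrix {n : ℕ} (hn : 3 ≤ n) : IsStronglyForcing (sMatrix n) I₃ := by
  intro i j hij
  rcases (sMatrix_eq_true_iff i j).1 hij with ⟨hi, hj⟩ | ⟨hi, hj, hij⟩
  · obtain ⟨r, c, hr, hc, hrc, hr0, hc0, -⟩ :=
      exists_sMatrix_submatrix_eq_I₃ (n := n) one_pos one_pos (by omega)
    exact ⟨r, c, hr, hc, hrc, 0, 0, Fin.ext (hr0.trans hi.symm), Fin.ext (hc0.trans hj.symm)⟩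
  · rcases Nat.lt_or_gt_of_ne hij with hlt | hgt
    · obtain ⟨r, c, hr, hc, hrc, -, -, hr1, hc1, -⟩ :=
        exists_sMatrix_submatrix_eq_I₃ (Nat.pos_of_ne_zero hi) (Nat.pos_of_ne_zero hj) hlt
      exact ⟨r, c, hr, hc, hrc, 1, 1, Fin.ext hr1, Fin.ext hc1⟩
    · have hin := i.isLt
      have hjn := j.isLt
      obtain ⟨r, c, hr, hc, hrc, -, -, -, -, hr2, hc2⟩ :=
        exists_sMatrix_submatrix_eq_I₃ (n := n) (a := n - j) (b := n - i)
          (by omega) (by omega) (by omega)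
      exact ⟨r, c, hr, hc, hrc, 2, 2, Fin.ext (by omega), Fin.ext (by omega)⟩

theorem card_sMatrix_row_zero {n : ℕ} (i : Fin n) (hi : (i : ℕ) = 0) :
    #{j | sMatrix n i j = true} = 1 := by
  rw [card_eq_one]
  refine ⟨⟨0, i.pos⟩, ?_⟩
  ext j
  simp only [mem_filter, mem_univ, true_and, sMatrix_eq_true_iff, mem_singleton, Fin.ext_iff]
  omega

theorem card_sMatrix_row_of_ne_zero {n : ℕ} (i : Fin n) (hi : (i : ℕ) ≠ 0) :
    #{j | sMatrix n i j = true} = n - 2 := by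
  have hin := i.isLt
  have hrow : ({j | sMatrix n i j = true} : Finset (Fin n)) =
      univ \ {⟨0, by omega⟩, ⟨n - i, by omega⟩} := by
    ext j
    simp only [mem_filter, mem_univ, true_and, sMatrix_eq_true_iff, mem_sdiff, mem_insert,
      mem_singleton, Fin.ext_iff]
    omega
  rw [hrow, card_sdiff_of_subset (subset_univ _), card_pair (by simp [Fin.ext_iff]; omega)]
  simp

theorem onesCount_sMatrix {n : ℕ} (hn : 3 ≤ n) : onesCount (sMatrix n) = n ^ 2 - 3 * n + 3 := by
  obtain ⟨m, rfl⟩ : ∃ m, n = m + 3 := ⟨n - 3, by omega⟩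
  have hrow (k : Fin (m + 2)) : #{j | sMatrix (m + 3) k.succ j = true} = m + 1 :=
    card_sMatrix_row_of_ne_zero _ (by simp)
  rw [onesCount_eq_sum_card_row, Fin.sum_univ_succ, card_sMatrix_row_zero _ rfl]
  simp only [hrow, sum_const, card_univ, Fintype.card_fin, smul_eq_mul]
  rw [show (m + 3) ^ 2 = 3 * (m + 3) + m * (m + 3) by ring, Nat.add_sub_cancel_left]
  ring

theorem stmt17 (n : ℕ) (hn : 3 ≤ n) :
    IsStronglyForcing
      (fun (i j : Fin n) =>
        decide (((i : ℕ) = 0 ∧ (j : ℕ) = 0) ∨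
          ((i : ℕ) ≠ 0 ∧ (j : ℕ) ≠ 0 ∧ (i : ℕ) + (j : ℕ) ≠ n)))
      (fun (i j : Fin 3) => decide (i = j)) ∧
    onesCount
      (fun (i j : Fin n) =>
        decide (((i : ℕ) = 0 ∧ (j : ℕ) = 0) ∨
          ((i : ℕ) ≠ 0 ∧ (j : ℕ) ≠ 0 ∧ (i : ℕ) + (j : ℕ) ≠ n))) = n ^ 2 - 3 * n + 3 ∧
    n ^ 2 - 3 * n + 3 ≤ MMax n n (fun (i j : Fin 3) => decide (i = j)) :=
  ⟨isStronglyForcing_sMatrix hn, onesCount_sMatrix hn,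
    onesCount_sMatrix hn ▸ onesCount_le_MMax (isStronglyForcing_sMatrix hn)⟩
end
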